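/- arXiv:1411.4818 — 4 statements merged into one kernel-verified Lean document; each statement's English description precedes it below -/
import Mathlib

section
/- Let a : ℝ → ℝ be continuous and T-periodic with nonzero average ā, and let ζ be the unique T-periodic solution of ζ' = -ζ·a - 1. If ā > 0 then ζ(t) < 0 for all t ∈ ℝ, and if ā < 0 then ζ(t) > 0 for all t ∈ ℝ. In particular ζ never vanishes. -/
/-!
With `A t = ∫ s in 0..t, a s`, the integrating factor `exp A` turns the equation into
`(ζ · exp A)' = -exp A < 0`, so `ζ · exp A` is strictly decreasing. Periodicity of `a` gives
`A (t + T) = A t + T ā`, and periodicity of `ζ` then turns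
`ζ (t + T) exp (A (t + T)) < ζ t exp (A t)` into `ζ t (exp (T ā) - 1) < 0`:
the sign of `ζ` is opposite to that of `ā`, everywhere.
-/

open Real

theorem Function.Periodic.intervalIntegral_zero_add {a : ℝ → ℝ} {T : ℝ}
    (haper : Function.Periodic a T) (ha : Continuous a) (t : ℝ) :
    ∫ s in 0..t + T, a s = (∫ s in 0..t, a s) + ∫ s in 0..T, a s := by
  simpa using haper.intervalIntegral_add_eq_add 0 t fun _ _ ↦ ha.intervalIntegrable _ _

theorem strictAnti_mul_exp_integral {a b ζ : ℝ → ℝ} (ha : Continuous a) (hb : ∀ t, 0 < b t)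
    (hζ : ∀ t, HasDerivAt ζ (-(ζ t) * a t - b t) t) :
    StrictAnti fun t ↦ ζ t * exp (∫ s in 0..t, a s) := by
  refine strictAnti_of_hasDerivAt_neg (f' := fun t ↦ -b t * exp (∫ s in 0..t, a s))
    (fun t ↦ ?_) fun t ↦ mul_neg_of_neg_of_pos (neg_neg_of_pos (hb t)) (exp_pos _)
  exact ((hζ t).fun_mul (ha.integral_hasStrictDerivAt 0 t).hasDerivAt.exp).congr_deriv (by ring)

theorem Function.Periodic.mul_exp_integral_sub_one_neg {a b ζ : ℝ → ℝ} {T : ℝ} (hT : 0 < T)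
    (ha : Continuous a) (haper : Function.Periodic a T) (hb : ∀ t, 0 < b t)
    (hζ : ∀ t, HasDerivAt ζ (-(ζ t) * a t - b t) t)
    (hζper : Function.Periodic ζ T) (t : ℝ) :
    ζ t * (exp (∫ s in 0..T, a s) - 1) < 0 := by
  have hdecr := strictAnti_mul_exp_integral ha hb hζ (lt_add_of_pos_right t hT)
  simp only [hζper t, haper.intervalIntegral_zero_add ha, exp_add] at hdecr
  have : ζ t * (exp (∫ s in 0..T, a s) - 1) * exp (∫ s in 0..t, a s) < 0 := by linarith
  exact neg_of_mul_neg_left this (exp_pos _).le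

theorem stmt_1_general (T : ℝ) (hT : 0 < T) (a : ℝ → ℝ) (ha : Continuous a)
    (haper : ∀ t, a (t + T) = a t)
    (abar : ℝ) (habar : abar = (1 / T) * ∫ t in (0:ℝ)..T, a t)
    (ζ : ℝ → ℝ)
    (hζ : ∀ t, HasDerivAt ζ (-(ζ t) * a t - 1) t)
    (hζper : ∀ t, ζ (t + T) = ζ t) :
    (0 < abar → ∀ t, ζ t < 0) ∧ (abar < 0 → ∀ t, 0 < ζ t) ∧ (∀ t, ζ t ≠ 0) := by
  have hint : ∫ s in 0..T, a s = T * abar := by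
    rw [habar]
    field_simp
  have key : ∀ t, ζ t * (exp (T * abar) - 1) < 0 := fun t ↦ by
    simpa [hint] using
      Function.Periodic.mul_exp_integral_sub_one_neg hT ha haper (fun _ ↦ one_pos) hζ hζper t
  refine ⟨fun hpos t ↦ ?_, fun hneg t ↦ ?_, fun t hζt ↦ by simpa [hζt] using key t⟩
  · have : 0 < exp (T * abar) - 1 := sub_pos.2 (one_lt_exp_iff.2 (mul_pos hT hpos))
    exact neg_of_mul_neg_left (key t) this.le
  · have : exp (T * abar) - 1 < 0 := sub_neg.2 (exp_lt_one_iff.2 (mul_neg_of_pos_of_neg hT hneg))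
    exact pos_of_mul_neg_left (key t) this.le

/-- The unique T-periodic solution of ζ' = -ζ·a - 1 is negative when the average
of `a` is positive, positive when it is negative; in particular it never vanishes. -/
theorem stmt_1 (T : ℝ) (hT : 0 < T) (a : ℝ → ℝ) (ha : Continuous a)
    (haper : ∀ t, a (t + T) = a t)
    (abar : ℝ) (habar : abar = (1 / T) * ∫ t in (0:ℝ)..T, a t) (habar0 : abar ≠ 0)
    (ζ : ℝ → ℝ)
    (hζ : ∀ t, HasDerivAt ζ (-(ζ t) * a t - 1) t)
    (hζper : ∀ t, ζ (t + T) = ζ t) :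
    (0 < abar → ∀ t, ζ t < 0) ∧ (abar < 0 → ∀ t, 0 < ζ t) ∧ (∀ t, ζ t ≠ 0) :=
  stmt_1_general T hT a ha haper abar habar ζ hζ hζper
end

section
/- Let a : ℝ → ℝ be continuous and T-periodic with nonzero average. Then there exists a unique T-periodic C¹ function σ : ℝ → ℝ, nowhere vanishing, such that a(t) = σ'(t)/σ(t) - σ(t) for all t ∈ ℝ. Moreover σ has constant sign equal to -sign(ā), where ā is the average of a. -/
/-!
With `A` a primitive of `a`, the substitution `ζ = 1 / σ` turns `a = σ' / σ - σ` into the linear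
equation `ζ' = -a ζ - 1`. Since `A (t + T) = A t + T ā` with `T ā ≠ 0`, the homogeneous equation
`w' = -a w` has no nonzero `T`-periodic solution (`w exp A` is constant), so the linear equation has
at most one periodic solution, and variation of constants produces one:
`ζ t = (1 - exp (T ā))⁻¹ ∫_t^{t+T} exp (A s - A t) ds`.
The integral is positive, so `ζ`, hence `σ`, has the sign of `1 - exp (T ā)`, that is `-sign ā`.
-/

open Real intervalIntegral Function

theorem Continuous.hasDerivAt_integral_self_add {f : ℝ → ℝ} (hf : Continuous f) (T t : ℝ) :
    HasDerivAt (fun u => ∫ s in u..u + T, f s) (f (t + T) - f t) t := by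
  have hF (u : ℝ) := (hf.integral_hasStrictDerivAt 0 u).hasDerivAt
  have hsplit : (fun u => ∫ s in u..u + T, f s) =
      fun u => (∫ s in (0 : ℝ)..u + T, f s) - ∫ s in (0 : ℝ)..u, f s := by
    funext u
    exact (integral_interval_sub_left (hf.intervalIntegrable _ _) (hf.intervalIntegrable _ _)).symm
  rw [hsplit]
  exact ((hF (t + T)).comp_add_const t T).sub (hF t)

theorem hasDerivAt_inv_iff_eq_div_sub {σ : ℝ → ℝ} {σ' a t : ℝ} (hσ : HasDerivAt σ σ' t)
    (h0 : σ t ≠ 0) :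
    HasDerivAt (fun s => (σ s)⁻¹) (-a * (σ t)⁻¹ - 1) t ↔ a = σ' / σ t - σ t := by
  have hinv : HasDerivAt (fun s => (σ s)⁻¹) (-σ' / σ t ^ 2) t := hσ.inv h0
  constructor
  · intro h
    have := hinv.unique h
    field_simp at this ⊢
    linarith
  · intro h
    refine hinv.congr_deriv ?_
    rw [h]
    field_simp
    ring

section PeriodicSolution

variable {a A : ℝ → ℝ} {T μ : ℝ}

noncomputable def periodicSolution (A : ℝ → ℝ) (T μ t : ℝ) : ℝ :=
  (1 - exp μ)⁻¹ * ∫ s in t..t + T, exp (A s - A t)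

theorem periodicSolution_periodic (hAT : ∀ t, A (t + T) = A t + μ) :
    Periodic (periodicSolution A T μ) T := by
  intro t
  simp only [periodicSolution, ← integral_comp_add_right, hAT]
  congr 2
  funext s
  ring_nf

theorem hasDerivAt_periodicSolution (hA : ∀ t, HasDerivAt A (a t) t)
    (hAT : ∀ t, A (t + T) = A t + μ) (hμ : μ ≠ 0) (t : ℝ) :
    HasDerivAt (periodicSolution A T μ) (-a t * periodicSolution A T μ t - 1) t := by
  have hAc : Continuous A := continuous_iff_continuousAt.2 fun t => (hA t).continuousAt
  have hsplit : periodicSolution A T μ =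
      fun u => (1 - exp μ)⁻¹ * (exp (-A u) * ∫ s in u..u + T, exp (A s)) := by
    funext u
    simp only [periodicSolution, ← integral_const_mul, ← exp_add, sub_eq_neg_add]
  have hI := (continuous_exp.comp hAc).hasDerivAt_integral_self_add T t
  have h1 : 1 - exp μ ≠ 0 := sub_ne_zero.2 fun h => hμ (exp_eq_one_iff μ |>.1 h.symm)
  rw [hsplit]
  refine ((((hA t).neg.exp).mul hI).const_mul _).congr_deriv ?_
  simp only [comp_apply, Pi.neg_apply, hAT, exp_add, exp_neg]
  field_simp
  ring

theorem integral_exp_sub_pos (hA : Continuous A) (hT : 0 < T) (t : ℝ) :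
    0 < ∫ s in t..t + T, exp (A s - A t) :=
  intervalIntegral_pos_of_pos (Continuous.intervalIntegrable (by fun_prop) _ _)
    (fun _ => exp_pos _) (lt_add_of_pos_right t hT)

theorem periodicSolution_neg (hA : Continuous A) (hT : 0 < T) (hμ : 0 < μ) (t : ℝ) :
    periodicSolution A T μ t < 0 :=
  mul_neg_of_neg_of_pos (inv_lt_zero.2 (sub_neg.2 (one_lt_exp_iff.2 hμ)))
    (integral_exp_sub_pos hA hT t)

theorem periodicSolution_pos (hA : Continuous A) (hT : 0 < T) (hμ : μ < 0) (t : ℝ) :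
    0 < periodicSolution A T μ t :=
  mul_pos (inv_pos.2 (sub_pos.2 (exp_lt_one_iff.2 hμ))) (integral_exp_sub_pos hA hT t)

theorem eq_zero_of_periodic_of_hasDerivAt (hA : ∀ t, HasDerivAt A (a t) t)
    (hAT : ∀ t, A (t + T) = A t + μ) (hμ : μ ≠ 0) {w : ℝ → ℝ}
    (hw : ∀ t, HasDerivAt w (-a t * w t) t) (hwT : Periodic w T) : w = 0 := by
  have hd (t : ℝ) : HasDerivAt (fun t => w t * exp (A t)) 0 t :=
    ((hw t).mul (hA t).exp).congr_deriv (by ring)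
  have hconst (t : ℝ) : w t * exp (A t) = w 0 * exp (A 0) :=
    is_const_of_deriv_eq_zero (fun s => (hd s).differentiableAt) (fun s => (hd s).deriv) t 0
  have hw0 : w 0 = 0 := by
    have h := hconst T
    rw [← zero_add T, hwT, hAT, exp_add] at h
    have hexp : exp μ ≠ 1 := fun h => hμ (exp_eq_one_iff μ |>.1 h)
    have : w 0 * exp (A 0) * (exp μ - 1) = 0 := by linear_combination h
    simpa [exp_ne_zero, sub_eq_zero, hexp] using this
  funext t
  simpa [hw0, exp_ne_zero] using hconst t

theorem eq_periodicSolution (hA : ∀ t, HasDerivAt A (a t) t) (hAT : ∀ t, A (t + T) = A t + μ)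
    (hμ : μ ≠ 0) {ζ : ℝ → ℝ} (hζ : ∀ t, HasDerivAt ζ (-a t * ζ t - 1) t) (hζT : Periodic ζ T) :
    ζ = periodicSolution A T μ := by
  have hw (t : ℝ) :
      HasDerivAt (ζ - periodicSolution A T μ) (-a t * (ζ - periodicSolution A T μ) t) t :=
    ((hζ t).sub (hasDerivAt_periodicSolution hA hAT hμ t)).congr_deriv
      (by simp only [Pi.sub_apply]; ring)
  exact sub_eq_zero.1 <|
    eq_zero_of_periodic_of_hasDerivAt hA hAT hμ hw (hζT.sub (periodicSolution_periodic hAT))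

theorem riccati_periodic_iff (ha : Continuous a) (hA : ∀ t, HasDerivAt A (a t) t)
    (hAT : ∀ t, A (t + T) = A t + μ) (hT : 0 < T) (hμ : μ ≠ 0) {σ : ℝ → ℝ} :
    (ContDiff ℝ 1 σ ∧ Periodic σ T ∧ (∀ t, σ t ≠ 0) ∧ ∀ t, a t = deriv σ t / σ t - σ t) ↔
      σ = fun t => (periodicSolution A T μ t)⁻¹ := by
  set ζ := periodicSolution A T μ
  have hζ (t : ℝ) : HasDerivAt ζ (-a t * ζ t - 1) t := hasDerivAt_periodicSolution hA hAT hμ t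
  have hζT : Periodic ζ T := periodicSolution_periodic hAT
  have hAc : Continuous A := continuous_iff_continuousAt.2 fun t => (hA t).continuousAt
  have hζ0 (t : ℝ) : ζ t ≠ 0 := by
    rcases hμ.lt_or_gt with hμ | hμ
    exacts [(periodicSolution_pos hAc hT hμ t).ne', (periodicSolution_neg hAc hT hμ t).ne]
  constructor
  · rintro ⟨hσC1, hσT, hσ0, hσa⟩
    have hσ (t : ℝ) : HasDerivAt σ (deriv σ t) t :=
      (hσC1.differentiable one_ne_zero t).hasDerivAt
    have hinv : (fun t => (σ t)⁻¹) = ζ :=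
      eq_periodicSolution hA hAT hμ
        (fun t => (hasDerivAt_inv_iff_eq_div_sub (hσ t) (hσ0 t)).2 (hσa t)) (hσT.comp Inv.inv)
    funext t
    rw [← hinv, inv_inv]
  · rintro rfl
    have hζc : Continuous ζ := continuous_iff_continuousAt.2 fun t => (hζ t).continuousAt
    have hζC1 : ContDiff ℝ 1 ζ := by
      refine contDiff_one_iff_deriv.2 ⟨fun t => (hζ t).differentiableAt, ?_⟩
      rw [funext fun t => (hζ t).deriv]
      fun_prop
    have hσ (t : ℝ) : HasDerivAt (fun s => (ζ s)⁻¹) _ t := (hζ t).inv (hζ0 t)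
    refine ⟨hζC1.inv hζ0, hζT.comp Inv.inv, fun t => inv_ne_zero (hζ0 t), fun t => ?_⟩
    rw [(hσ t).deriv]
    refine (hasDerivAt_inv_iff_eq_div_sub (hσ t) (inv_ne_zero (hζ0 t))).1 ?_
    simpa only [Pi.inv_apply, inv_inv] using hζ t

end PeriodicSolution

/-- There is a unique T-periodic C¹ nowhere-vanishing σ with a = σ'/σ - σ,
and any such σ has constant sign equal to -sign(ā). -/
theorem stmt_2 (T : ℝ) (hT : 0 < T) (a : ℝ → ℝ) (ha : Continuous a)
    (haper : ∀ t, a (t + T) = a t)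
    (abar : ℝ) (habar : abar = (1 / T) * ∫ t in (0:ℝ)..T, a t) (habar0 : abar ≠ 0) :
    (∃! σ : ℝ → ℝ,
        ContDiff ℝ 1 σ ∧ (∀ t, σ (t + T) = σ t) ∧ (∀ t, σ t ≠ 0) ∧
        (∀ t, a t = deriv σ t / σ t - σ t)) ∧
    (∀ σ : ℝ → ℝ,
        (ContDiff ℝ 1 σ ∧ (∀ t, σ (t + T) = σ t) ∧ (∀ t, σ t ≠ 0) ∧
          (∀ t, a t = deriv σ t / σ t - σ t)) →
        ((0 < abar → ∀ t, σ t < 0) ∧ (abar < 0 → ∀ t, 0 < σ t))) := by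
  set A : ℝ → ℝ := fun t => ∫ s in (0:ℝ)..t, a s
  have hA (t : ℝ) : HasDerivAt A (a t) t := (ha.integral_hasStrictDerivAt 0 t).hasDerivAt
  have hAc : Continuous A := continuous_iff_continuousAt.2 fun t => (hA t).continuousAt
  have hAT (t : ℝ) : A (t + T) = A t + T * abar := by
    rw [habar, one_div, mul_inv_cancel_left₀ hT.ne']
    simpa using Periodic.intervalIntegral_add_eq_add (f := a) haper 0 t
      fun _ _ => ha.intervalIntegrable _ _
  have hsol σ := riccati_periodic_iff ha hA hAT hT (mul_ne_zero hT.ne' habar0) (σ := σ)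
  refine ⟨⟨_, (hsol _).2 rfl, fun σ hσ => (hsol σ).1 hσ⟩, fun σ hσ => ?_⟩
  obtain rfl := (hsol σ).1 hσ
  exact ⟨fun h t => inv_lt_zero.2 (periodicSolution_neg hAc hT (mul_pos hT h) t),
    fun h t => inv_pos.2 (periodicSolution_pos hAc hT (mul_neg_of_pos_of_neg hT h) t)⟩
end

section
/- Let Y be a locally compact metric space and Z a compact subset of Y. Assume that every compact subset of Y containing Z has nonempty boundary (in Y). Then Y \ Z contains a connected set whose closure in Y intersects Z and is not compact. -/
/-!
Pass to the one-point compactification `X = Y ∪ {∞}`. A clopen subset of `X` containing `Z`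
but not `∞` would be a compact subset of `Y` containing `Z` with empty frontier, so the
connected component of `∞` meets `Z`. By Zorn's lemma it contains a continuum `K` that contains
`∞`, meets `Z` and is minimal with these properties (irreducible). Minimality, together with
boundary bumping, forces `K \ (Z ∪ {∞})` to be connected with `∞` and a point of `Z` in its
closure. Its trace `Γ` on `Y` is the required set: `closure Γ` is not compact because `∞` lies
in the closure of `Γ` in `X`.
-/

open Set Topology
open scoped OnePoint

theorem IsChain.directed_val_superset {α : Type*} {c : Set (Set α)} (hc : IsChain (· ⊆ ·) c) :
    Directed (· ⊇ ·) (fun s : c => (s : Set α)) :=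
  (IsChain.directedOn (r := fun s t : Set α => s ⊇ t) hc.symm).directed_val

section Connectedness

variable {X : Type*} [TopologicalSpace X]

theorem exists_isClopen_mem_subset_of_connectedComponent_subset [T2Space X] [CompactSpace X]
    {x : X} {U : Set X} (hU : IsOpen U) (h : connectedComponent x ⊆ U) :
    ∃ V, IsClopen V ∧ x ∈ V ∧ V ⊆ U := by
  let N := {s : Set X // IsClopen s ∧ x ∈ s}
  have : Nonempty N := ⟨⟨univ, isClopen_univ, mem_univ x⟩⟩
  obtain ⟨⟨V, hV, hxV⟩, hVU⟩ := exists_subset_nhds_of_isCompact (V := fun s : N => s.1)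
    (fun s t => ⟨⟨s.1 ∩ t.1, s.2.1.inter t.2.1, s.2.2, t.2.2⟩, inter_subset_left,
      inter_subset_right⟩)
    (fun s => s.2.1.isClosed.isCompact)
    (fun y hy => hU.mem_nhds (h ((connectedComponent_eq_iInter_isClopen x).symm ▸ hy)))
  exact ⟨V, hV, hxV, hVU⟩

theorem IsChain.isPreconnected_sInter [T2Space X] {c : Set (Set X)} (hc : IsChain (· ⊆ ·) c)
    (hne : c.Nonempty) (hcpt : ∀ s ∈ c, IsCompact s) (hconn : ∀ s ∈ c, IsPreconnected s) :
    IsPreconnected (⋂₀ c) := by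
  have : Nonempty c := hne.to_subtype
  have hcl : IsClosed (⋂₀ c) := isClosed_sInter fun s hs => (hcpt s hs).isClosed
  have hK : IsCompact (⋂₀ c) :=
    (hcpt _ hne.some_mem).of_isClosed_subset hcl (sInter_subset_of_mem hne.some_mem)
  rw [isPreconnected_iff_subset_of_fully_disjoint_closed hcl]
  intro a b ha hb hab hdisj
  obtain ⟨u, v, hu, hv, hau, hbv, huv⟩ := SeparatedNhds.of_isCompact_isCompact
    (hK.inter_left ha) (hK.inter_left hb) (hdisj.mono inter_subset_left inter_subset_left)
  have habuv : ⋂₀ c ⊆ u ∪ v := fun x hx =>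
    (hab hx).imp (fun hxa => hau ⟨hxa, hx⟩) (fun hxb => hbv ⟨hxb, hx⟩)
  obtain ⟨⟨s, hs⟩, hsuv⟩ := exists_subset_nhds_of_isCompact hc.directed_val_superset
    (fun s => hcpt s s.2) fun x hx => (hu.union hv).mem_nhds (habuv (sInter_eq_iInter ▸ hx))
  have hKs : ⋂₀ c ⊆ s := sInter_subset_of_mem hs
  rcases (hconn s hs).subset_or_subset hu hv huv hsuv with hsu | hsv
  · exact .inl fun x hx => (hab hx).resolve_right fun hxb =>
      huv.le_bot ⟨hsu (hKs hx), hbv ⟨hxb, hx⟩⟩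
  · exact .inr fun x hx => (hab hx).resolve_left fun hxa =>
      huv.le_bot ⟨hau ⟨hxa, hx⟩, hsv (hKs hx)⟩

/-- The boundary bumping theorem. -/
theorem nonempty_closure_connectedComponentIn_diff [T2Space X] [CompactSpace X]
    [PreconnectedSpace X] {U : Set X} {x : X} (hU : IsOpen U) (hUc : Uᶜ.Nonempty) (hx : x ∈ U) :
    (closure (connectedComponentIn U x) \ U).Nonempty := by
  set E := connectedComponentIn U x
  rw [nonempty_iff_ne_empty, Ne, sdiff_eq_empty]
  intro hEU
  have hEcl : IsClosed E := isClosed_of_closure_subset <|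
    isPreconnected_connectedComponentIn.closure.subset_connectedComponentIn
      (subset_closure (mem_connectedComponentIn hx)) hEU
  obtain ⟨o, ho, hEo, hoU⟩ :=
    normal_exists_closure_subset hEcl hU (connectedComponentIn_subset U x)
  have hxo : x ∈ closure o := subset_closure (hEo (mem_connectedComponentIn hx))
  have : CompactSpace (closure o) := isCompact_iff_compactSpace.mp isClosed_closure.isCompact
  -- A clopen neighbourhood of `x` in the compact space `closure o` lying inside `o` is clopen
  -- in `X`, which is impossible in the connected space `X`.
  obtain ⟨V, hV, hxV, hVo⟩ := exists_isClopen_mem_subset_of_connectedComponent_subset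
    (ho.preimage continuous_subtype_val) (x := ⟨x, hxo⟩) <| by
      rw [← image_subset_iff, ← connectedComponentIn_eq_image hxo]
      exact (connectedComponentIn_mono x hoU).trans hEo
  obtain ⟨G, hG, rfl⟩ := isOpen_induced_iff.mp hV.isOpen
  have hVeq : Subtype.val '' (Subtype.val ⁻¹' G : Set (closure o)) = o ∩ G := by
    rw [Subtype.image_preimage_coe]
    rw [← image_subset_iff, Subtype.image_preimage_coe] at hVo
    exact Subset.antisymm (subset_inter hVo inter_subset_right)
      (inter_subset_inter_left _ subset_closure)
  have hclopen : IsClopen (o ∩ G) :=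
    ⟨hVeq ▸ isClosed_closure.isClosedEmbedding_subtypeVal.isClosedMap _ hV.isClosed,
      ho.inter hG⟩
  have huniv : o ∩ G = univ := hclopen.eq_univ ⟨x, hVeq ▸ ⟨_, hxV, rfl⟩⟩
  obtain ⟨y, hy⟩ := hUc
  exact hy (hoU (subset_closure (huniv ▸ mem_univ y : y ∈ o ∩ G).1))

theorem IsPreconnected.union_inter_of_diff_subset_union {T C P Q : Set X}
    (hT : IsPreconnected T) (hC : IsPreconnected C) (hCT : C ⊆ T) (hP : IsOpen P) (hQ : IsOpen Q)
    (hcover : T \ C ⊆ P ∪ Q) (hPQ : T \ C ∩ (P ∩ Q) = ∅) :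
    IsPreconnected (C ∪ T ∩ P) := by
  intro u v hu hv hD ⟨x, hxD, hxu⟩ ⟨y, hyD, hyv⟩
  by_contra! huv
  wlog hCu : C ⊆ u generalizing u v x y
  · have hCv : C ⊆ v := (isPreconnected_iff_subset_of_disjoint.mp hC u v hu hv
      (subset_union_left.trans hD) (subset_empty_iff.mp <|
        (inter_subset_inter_left _ subset_union_left).trans huv.subset)).resolve_left hCu
    exact this v u hv hu (union_comm u v ▸ hD) y hyD hyv x hxD hxu (inter_comm u v ▸ huv) hCv
  have huv' : ∀ z ∈ C ∪ T ∩ P, z ∈ u → z ∉ v := fun z hz hzu hzv =>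
    huv.subset ⟨hz, hzu, hzv⟩
  have hTcover : T ⊆ (u ∪ Q) ∪ (v ∩ P) := by
    intro t ht
    by_cases htC : t ∈ C
    · exact .inl (.inl (hCu htC))
    rcases hcover ⟨ht, htC⟩ with htP | htQ
    · exact (hD (.inr ⟨ht, htP⟩)).imp .inl (⟨·, htP⟩)
    · exact .inl (.inr htQ)
  have hyTP : y ∈ T ∩ P := hyD.resolve_left fun hyC => huv' y hyD (hCu hyC) hyv
  obtain ⟨z, hzT, hzuQ, hzv, hzP⟩ := hT (u ∪ Q) (v ∩ P) (hu.union hQ) (hv.inter hP) hTcover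
    ⟨x, hxD.elim (hCT ·) (·.1), .inl hxu⟩ ⟨y, hyTP.1, hyv, hyTP.2⟩
  by_cases hzC : z ∈ C
  · exact huv' z (.inl hzC) (hCu hzC) hzv
  rcases hzuQ with hzu | hzQ
  · exact huv' z (.inr ⟨hzT, hzP⟩) hzu hzv
  · exact hPQ.subset ⟨⟨hzT, hzC⟩, hzP, hzQ⟩

theorem mem_closure_compl_diff_singleton [PreconnectedSpace X] [T1Space X] {A : Set X} {b : X}
    (hA : IsClosed A) (hAne : A.Nonempty) (hb : b ∉ A) : b ∈ closure (Aᶜ \ {b}) := by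
  have hdense : Dense ({b}ᶜ : Set X) := dense_compl_singleton_iff_not_open.mpr fun hopen => by
    obtain ⟨a, ha⟩ := hAne
    have hb_univ : ({b} : Set X) = univ :=
      IsClopen.eq_univ ⟨isClosed_singleton, hopen⟩ (singleton_nonempty b)
    exact hb (eq_of_mem_singleton (hb_univ ▸ mem_univ a) ▸ ha)
  have hb' : b ∈ closure (Aᶜ \ {b} ∪ A) := by
    refine closure_mono (fun x hx => ?_) (hdense.closure_eq ▸ mem_univ b)
    by_cases hxA : x ∈ A
    exacts [.inr hxA, .inl ⟨hxA, hx⟩]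
  rw [closure_union, hA.closure_eq] at hb'
  exact hb'.resolve_right hb

end Connectedness

section IrreducibleContinuum

variable {X : Type*} [TopologicalSpace X]

structure IsContinuumJoining (b : X) (A K : Set X) : Prop where
  isCompact : IsCompact K
  isPreconnected : IsPreconnected K
  mem : b ∈ K
  inter_nonempty : (K ∩ A).Nonempty

theorem IsContinuumJoining.exists_minimal_subset [T2Space X] {b : X} {A K : Set X}
    (hA : IsClosed A) (hK : IsContinuumJoining b A K) :
    ∃ L ⊆ K, Minimal (IsContinuumJoining b A) L := by
  refine zorn_superset_nonempty {L | IsContinuumJoining b A L} (fun c hcS hc hne => ?_) K hK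
  have : Nonempty c := hne.to_subtype
  refine ⟨⋂₀ c, ⟨?_, ?_, ?_, ?_⟩, fun s hs => sInter_subset_of_mem hs⟩
  · exact (hcS hne.some_mem).isCompact.of_isClosed_subset
      (isClosed_sInter fun s hs => (hcS hs).isCompact.isClosed) (sInter_subset_of_mem hne.some_mem)
  · exact hc.isPreconnected_sInter hne (fun s hs => (hcS hs).isCompact)
      (fun s hs => (hcS hs).isPreconnected)
  · exact mem_sInter.mpr fun s hs => (hcS hs).mem
  · have := IsCompact.nonempty_iInter_of_directed_nonempty_isCompact_isClosed
      (fun s : c => (s : Set X) ∩ A) (fun s t => (hc.directed_val_superset s t).imp fun _ h =>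
        ⟨inter_subset_inter_left A h.1, inter_subset_inter_left A h.2⟩)
      (fun s => (hcS s.2).inter_nonempty) (fun s => (hcS s.2).isCompact.inter_right hA)
      (fun s => (hcS s.2).isCompact.isClosed.inter hA)
    rwa [← iInter_inter, ← sInter_eq_iInter] at this

theorem isContinuumJoining_image_val_iff {K : Set X} {b : K} {A : Set X} {E : Set K} :
    IsContinuumJoining (b : X) A (Subtype.val '' E) ↔
      IsContinuumJoining b (Subtype.val ⁻¹' A) E := by
  have hnonempty : (Subtype.val '' E ∩ A).Nonempty ↔ (E ∩ Subtype.val ⁻¹' A).Nonempty := by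
    rw [← image_inter_preimage, image_nonempty]
  exact ⟨fun h => ⟨IsInducing.subtypeVal.isCompact_iff.mpr h.isCompact,
      IsInducing.subtypeVal.isPreconnected_image.mp h.isPreconnected,
      Subtype.val_injective.mem_set_image.mp h.mem, hnonempty.mp h.inter_nonempty⟩,
    fun h => ⟨IsInducing.subtypeVal.isCompact_iff.mp h.isCompact,
      IsInducing.subtypeVal.isPreconnected_image.mpr h.isPreconnected,
      Subtype.val_injective.mem_set_image.mpr h.mem, hnonempty.mpr h.inter_nonempty⟩⟩

theorem Minimal.isContinuumJoining_subtype_univ {K : Set X} {b : K} {A : Set X}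
    (hK : Minimal (IsContinuumJoining (b : X) A) K) :
    Minimal (IsContinuumJoining b (Subtype.val ⁻¹' A)) univ := by
  refine ⟨isContinuumJoining_image_val_iff.mp ?_, fun E hE _ x _ => ?_⟩
  · rw [image_univ, Subtype.range_coe]
    exact hK.prop
  · exact Subtype.val_injective.mem_set_image.mp <|
      hK.2 (isContinuumJoining_image_val_iff.mpr hE) (Subtype.coe_image_subset K E) x.2

variable {A : Set X} {b : X}

theorem closure_eq_univ_of_minimal [CompactSpace X] (hmin : Minimal (IsContinuumJoining b A) univ)
    {E : Set X} (hE : IsPreconnected E) (hbE : b ∈ closure E) (hEA : (closure E ∩ A).Nonempty) :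
    closure E = univ :=
  (hmin.eq_of_ge ⟨isClosed_closure.isCompact, hE.closure, hbE, hEA⟩ (subset_univ _)).symm

theorem isPreconnected_compl_of_minimal [T2Space X] [CompactSpace X] (hA : IsClosed A)
    (hb : b ∉ A) (hmin : Minimal (IsContinuumJoining b A) univ) : IsPreconnected Aᶜ := by
  have : PreconnectedSpace X := ⟨hmin.prop.isPreconnected⟩
  obtain ⟨a, haE, haA⟩ := nonempty_closure_connectedComponentIn_diff hA.isOpen_compl
    (by rw [compl_compl]; exact hmin.prop.inter_nonempty.mono inter_subset_right) hb
  have hE := closure_eq_univ_of_minimal hmin isPreconnected_connectedComponentIn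
    (subset_closure (mem_connectedComponentIn hb)) ⟨a, haE, not_not.mp haA⟩
  exact isPreconnected_connectedComponentIn.subset_closure (connectedComponentIn_subset _ _)
    (hE ▸ subset_univ _)

theorem isPreconnected_compl_singleton_of_minimal [T2Space X] [CompactSpace X] (hb : b ∉ A)
    (hmin : Minimal (IsContinuumJoining b A) univ) : IsPreconnected ({b}ᶜ : Set X) := by
  have : PreconnectedSpace X := ⟨hmin.prop.isPreconnected⟩
  obtain ⟨a, -, ha⟩ := hmin.prop.inter_nonempty
  have hab : a ∈ ({b}ᶜ : Set X) := fun h => hb (eq_of_mem_singleton h ▸ ha)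
  obtain ⟨c, hcE, hc⟩ := nonempty_closure_connectedComponentIn_diff
    isClosed_singleton.isOpen_compl ⟨b, by simp⟩ hab
  have hE := closure_eq_univ_of_minimal hmin isPreconnected_connectedComponentIn
    (eq_of_mem_singleton (not_notMem.mp hc) ▸ hcE)
    ⟨a, subset_closure (mem_connectedComponentIn hab), ha⟩
  exact isPreconnected_connectedComponentIn.subset_closure (connectedComponentIn_subset _ _)
    (hE ▸ subset_univ _)

theorem closure_inter_nonempty_of_isPreconnected_compl_singleton
    (hconn : IsPreconnected ({b}ᶜ : Set X)) (hAne : A.Nonempty) (hb : b ∉ A) {W V : Set X}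
    (hW : IsOpen W) (hV : IsOpen V) (hWV : Disjoint W V) (hWS : W ⊆ Aᶜ \ {b})
    (hcover : Aᶜ \ {b} ⊆ W ∪ V) (hWne : W.Nonempty) : (closure W ∩ A).Nonempty := by
  by_contra! hWA
  obtain ⟨w, hw⟩ := hWne
  obtain ⟨a, ha⟩ := hAne
  have hsplit : {b}ᶜ ⊆ W ∪ (closure W)ᶜ := by
    intro x hxb
    by_cases hxA : x ∈ A
    · exact .inr fun h => hWA.subset ⟨h, hxA⟩
    · exact (hcover ⟨hxA, hxb⟩).imp_right fun hxV hxW =>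
        disjoint_left.mp (hWV.closure_left hV) hxW hxV
  obtain ⟨x, -, hxW, hxW'⟩ := hconn W (closure W)ᶜ hW isClosed_closure.isOpen_compl hsplit
    ⟨w, (hWS hw).2, hw⟩
    ⟨a, fun h => hb (eq_of_mem_singleton h ▸ ha), fun h => hWA.subset ⟨h, ha⟩⟩
  exact hxW' (subset_closure hxW)

theorem isPreconnected_compl_diff_singleton_of_minimal [T2Space X] [CompactSpace X]
    (hA : IsClosed A) (hb : b ∉ A) (hmin : Minimal (IsContinuumJoining b A) univ) :
    IsPreconnected (Aᶜ \ {b}) := by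
  have hS : IsOpen (Aᶜ \ {b}) := hA.isOpen_compl.sdiff isClosed_singleton
  rintro u v hu hv hcover ⟨p, hpS, hpu⟩ ⟨q, hqS, hqv⟩
  by_contra! huv
  -- `{b} ∪ Aᶜ ∩ u` is preconnected and its closure meets `A`, so by minimality it is dense;
  -- yet it misses the nonempty open set `Aᶜ \ {b} ∩ v`.
  have hconn : IsPreconnected ({b} ∪ Aᶜ ∩ u) :=
    (isPreconnected_compl_of_minimal hA hb hmin).union_inter_of_diff_subset_union
      isPreconnected_singleton (singleton_subset_iff.mpr hb) hu hv hcover huv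
  have hWA := closure_inter_nonempty_of_isPreconnected_compl_singleton
    (isPreconnected_compl_singleton_of_minimal hb hmin)
    (hmin.prop.inter_nonempty.mono inter_subset_right) hb (hS.inter hu) (hS.inter hv)
    (disjoint_left.mpr fun x hxu hxv => huv.subset ⟨hxu.1, hxu.2, hxv.2⟩) inter_subset_left
    (fun x hx => (hcover hx).imp (⟨hx, ·⟩) (⟨hx, ·⟩)) ⟨p, hpS, hpu⟩
  have hdense := closure_eq_univ_of_minimal hmin hconn (subset_closure (.inl rfl))
    (hWA.mono (inter_subset_inter_left _ (closure_mono fun x hx => .inr ⟨hx.1.1, hx.2⟩)))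
  have hdisj : Disjoint (Aᶜ \ {b} ∩ v) ({b} ∪ Aᶜ ∩ u) := by
    refine disjoint_left.mpr fun x hxv hx => hx.elim (fun hxb => hxv.1.2 hxb) fun hxu => ?_
    exact huv.subset ⟨hxv.1, hxu.2, hxv.2⟩
  exact disjoint_left.mp (hdisj.closure_right (hS.inter hv)) ⟨hqS, hqv⟩ (hdense ▸ mem_univ q)

theorem Minimal.exists_isConnected_of_isContinuumJoining [T2Space X] {K : Set X}
    (hA : IsClosed A) (hb : b ∉ A) (hK : Minimal (IsContinuumJoining b A) K) :
    ∃ T, IsConnected T ∧ Disjoint T A ∧ b ∉ T ∧ b ∈ closure T ∧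
      (closure T ∩ A).Nonempty := by
  have : CompactSpace K := isCompact_iff_compactSpace.mp hK.prop.isCompact
  set b' : K := ⟨b, hK.prop.mem⟩
  set A' : Set K := Subtype.val ⁻¹' A
  have hmin : Minimal (IsContinuumJoining b' A') univ := hK.isContinuumJoining_subtype_univ
  have : PreconnectedSpace K := ⟨hmin.prop.isPreconnected⟩
  have hA' : IsClosed A' := hA.preimage continuous_subtype_val
  have hb' : b' ∉ A' := hb
  have hA'ne : A'.Nonempty := hmin.prop.inter_nonempty.mono inter_subset_right
  have hbS : b' ∈ closure (A'ᶜ \ {b'}) := mem_closure_compl_diff_singleton hA' hA'ne hb'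
  obtain ⟨a, haS, haA⟩ := closure_inter_nonempty_of_isPreconnected_compl_singleton
    (isPreconnected_compl_singleton_of_minimal hb' hmin) hA'ne hb'
    (hA'.isOpen_compl.sdiff isClosed_singleton) isOpen_empty (disjoint_empty _) subset_rfl
    subset_union_left (closure_nonempty_iff.mp ⟨b', hbS⟩)
  have hclosure := image_closure_subset_closure_image (s := A'ᶜ \ {b'}) continuous_subtype_val
  refine ⟨Subtype.val '' (A'ᶜ \ {b'}), ⟨(closure_nonempty_iff.mp ⟨b', hbS⟩).image _,
    (isPreconnected_compl_diff_singleton_of_minimal hA' hb' hmin).image _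
      continuous_subtype_val.continuousOn⟩, ?_, ?_, hclosure ⟨b', hbS, rfl⟩,
    ⟨a, hclosure ⟨a, haS, rfl⟩, haA⟩⟩
  · exact disjoint_left.mpr fun _ ⟨x, hx, hxa⟩ hxA =>
      hx.1 (show (x : X) ∈ A from hxa ▸ hxA)
  · exact fun ⟨x, hx, hxb⟩ => hx.2 (Subtype.ext hxb)

end IrreducibleContinuum

namespace OnePoint

variable {Y : Type*} [TopologicalSpace Y] {Z : Set Y}

theorem isContinuumJoining_connectedComponent_infty [WeaklyLocallyCompactSpace Y] [T2Space Y]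
    (hZ : IsCompact Z) (hbd : ∀ K : Set Y, IsCompact K → Z ⊆ K → (frontier K).Nonempty) :
    IsContinuumJoining ∞ ((↑) '' Z) (connectedComponent (∞ : OnePoint Y)) := by
  refine ⟨isClosed_connectedComponent.isCompact, isPreconnected_connectedComponent,
    mem_connectedComponent, ?_⟩
  by_contra! h
  obtain ⟨V, hV, h_infty_V, hVZ⟩ := exists_isClopen_mem_subset_of_connectedComponent_subset
    (hZ.image continuous_coe).isClosed.isOpen_compl fun x hx hxZ => h.subset ⟨hx, hxZ⟩
  have hK : IsCompact ((↑) ⁻¹' Vᶜ : Set Y) :=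
    ((isClosed_iff_of_notMem (not_not_intro h_infty_V)).mp hV.compl.isClosed).2
  obtain ⟨y, hy⟩ := hbd _ hK fun z hz hzV => hVZ hzV ⟨z, hz, rfl⟩
  rw [(hV.compl.preimage continuous_coe).frontier_eq] at hy
  exact hy

theorem exists_isConnected_of_infty_mem_closure {T : Set (OnePoint Y)} (hT : IsConnected T)
    (hTZ : Disjoint T ((↑) '' Z)) (hT_infty : ∞ ∉ T) (h_infty_T : ∞ ∈ closure T)
    (hZT : (closure T ∩ (↑) '' Z).Nonempty) :
    ∃ Γ : Set Y, Γ ⊆ Zᶜ ∧ IsConnected Γ ∧ (closure Γ ∩ Z).Nonempty ∧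
      ¬ IsCompact (closure Γ) := by
  have hTΓ : (↑) '' ((↑) ⁻¹' T : Set Y) = T :=
    image_preimage_eq_of_subset (compl_infty ▸ fun x hx hx_infty => hT_infty (hx_infty ▸ hx))
  have hcl : closure ((↑) ⁻¹' T : Set Y) = (↑) ⁻¹' closure T :=
    (isOpenMap_coe.preimage_closure_eq_closure_preimage continuous_coe T).symm
  refine ⟨(↑) ⁻¹' T, fun y hy hyZ => disjoint_left.mp hTZ hy ⟨y, hyZ, rfl⟩, ?_, ?_, ?_⟩
  · rw [← hTΓ] at hT
    exact ⟨image_nonempty.mp hT.1, isOpenEmbedding_coe.isInducing.isPreconnected_image.mp hT.2⟩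
  · obtain ⟨_, hz, z, hzZ, rfl⟩ := hZT
    exact ⟨z, hcl ▸ hz, hzZ⟩
  · intro hcpt
    have : IsClosed ((↑) '' closure ((↑) ⁻¹' T : Set Y) : Set (OnePoint Y)) :=
      isClosed_image_coe.mpr ⟨isClosed_closure, hcpt⟩
    exact infty_notMem_image_coe <|
      closure_minimal (hTΓ.symm.subset.trans (image_mono subset_closure)) this h_infty_T

end OnePoint

/-- Global connection lemma: if Y is a locally compact metric space, Z ⊆ Y is
compact, and every compact subset of Y containing Z has nonempty boundary, then
Y \ Z contains a connected set whose closure meets Z and is not compact. -/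
theorem stmt_6 {Y : Type*} [MetricSpace Y] [LocallyCompactSpace Y]
    (Z : Set Y) (hZ : IsCompact Z)
    (hbd : ∀ K : Set Y, IsCompact K → Z ⊆ K → (frontier K).Nonempty) :
    ∃ Γ : Set Y, Γ ⊆ Zᶜ ∧ IsConnected Γ ∧
      (closure Γ ∩ Z).Nonempty ∧ ¬ IsCompact (closure Γ) := by
  have hZ' : IsClosed ((↑) '' Z : Set (OnePoint Y)) := (hZ.image OnePoint.continuous_coe).isClosed
  obtain ⟨K, -, hK⟩ :=
    (OnePoint.isContinuumJoining_connectedComponent_infty hZ hbd).exists_minimal_subset hZ'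
  obtain ⟨T, hT, hTZ, hT_infty, h_infty_T, hZT⟩ :=
    hK.exists_isConnected_of_isContinuumJoining hZ' OnePoint.infty_notMem_image_coe
  exact OnePoint.exists_isConnected_of_infty_mem_closure hT hTZ hT_infty h_infty_T hZT
end

section
/- Let f : ℝ × ℝ^k × ℝ^k → ℝ^k be continuous and T-periodic in its first argument, r > 0, and suppose x_n : ℝ → ℝ^k are T-periodic C¹ solutions of x_n'(t) = λ_n f(t, x_n(t), x_n(t-r)) with λ_n > 0, λ_n → 0, and x_n → x₀ uniformly where x₀ is a constant function with value p₀. Then ∫₀ᵀ f(t, p₀, p₀) dt = 0. -/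
open Filter in
/-- If T-periodic solutions xₙ of x' = λₙ f(t, x(t), x(t-r)) with λₙ > 0, λₙ → 0
converge uniformly to a constant p₀, then ∫₀ᵀ f(t, p₀, p₀) dt = 0. -/
theorem stmt_16 (k : ℕ) (T r : ℝ) (hT : 0 < T) (hr : 0 < r)
    (f : ℝ → (Fin k → ℝ) → (Fin k → ℝ) → (Fin k → ℝ))
    (hf : Continuous fun p : ℝ × (Fin k → ℝ) × (Fin k → ℝ) => f p.1 p.2.1 p.2.2)
    (hfper : ∀ t u v, f (t + T) u v = f t u v)
    (lam : ℕ → ℝ) (hlam : ∀ n, 0 < lam n) (hlam0 : Tendsto lam atTop (nhds 0))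
    (x : ℕ → ℝ → Fin k → ℝ)
    (hsol : ∀ n t, HasDerivAt (x n) (lam n • f t (x n t) (x n (t - r))) t)
    (hper : ∀ n t, x n (t + T) = x n t)
    (p₀ : Fin k → ℝ)
    (hconv : TendstoUniformly x (fun _ => p₀) atTop) :
    (∫ t in (0:ℝ)..T, f t p₀ p₀) = 0 := by
  have hxc : ∀ n, Continuous (x n) :=
    fun n => continuous_iff_continuousAt.2 fun t => (hsol n t).continuousAt
  set g : ℕ → ℝ → Fin k → ℝ := fun n t => f t (x n t) (x n (t - r)) with hg
  have hgc : ∀ n, Continuous (g n) := fun n =>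
    hf.comp (continuous_id.prodMk ((hxc n).prodMk
      ((hxc n).comp (continuous_id.sub continuous_const))))
  -- each integral is zero
  have hint : ∀ n, (∫ t in (0:ℝ)..T, g n t) = 0 := by
    intro n
    have h1 : (∫ t in (0:ℝ)..T, lam n • g n t) = x n T - x n 0 :=
      intervalIntegral.integral_eq_sub_of_hasDerivAt (fun t _ => hsol n t)
        (((hgc n).const_smul (lam n)).intervalIntegrable 0 T)
    have h2 : x n T - x n 0 = 0 := by
      have h := hper n 0
      rw [zero_add] at h
      rw [h, sub_self]
    rw [intervalIntegral.integral_smul] at h1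
    have h3 := h1.trans h2
    exact (smul_eq_zero.mp h3).resolve_left (ne_of_gt (hlam n))
  -- a uniform bound on f on a compact set
  have hK : IsCompact (Set.Icc (0:ℝ) T ×ˢ Metric.closedBall p₀ 1 ×ˢ Metric.closedBall p₀ 1) :=
    isCompact_Icc.prod ((isCompact_closedBall _ _).prod (isCompact_closedBall _ _))
  obtain ⟨C, hC⟩ := hK.exists_bound_of_continuousOn hf.continuousOn
  have hev : ∀ᶠ n in atTop, ∀ t, dist p₀ (x n t) < 1 :=
    Metric.tendstoUniformly_iff.mp hconv 1 one_pos
  have hlim : Tendsto (fun n => ∫ t in (0:ℝ)..T, g n t) atTop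
      (nhds (∫ t in (0:ℝ)..T, f t p₀ p₀)) := by
    apply intervalIntegral.tendsto_integral_filter_of_dominated_convergence (fun _ => C)
    · exact Filter.Eventually.of_forall fun n => (hgc n).aestronglyMeasurable
    · filter_upwards [hev] with n hn
      filter_upwards [] with t
      intro ht
      have ht' : t ∈ Set.Icc (0:ℝ) T := by
        rw [Set.uIoc_of_le hT.le] at ht
        exact ⟨ht.1.le, ht.2⟩
      have h1 : x n t ∈ Metric.closedBall p₀ 1 := by
        rw [Metric.mem_closedBall, dist_comm]; exact (hn t).le
      have h2 : x n (t - r) ∈ Metric.closedBall p₀ 1 := by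
        rw [Metric.mem_closedBall, dist_comm]; exact (hn (t - r)).le
      exact hC (t, x n t, x n (t - r)) ⟨ht', h1, h2⟩
    · exact intervalIntegrable_const
    · filter_upwards [] with t
      intro _
      have htend : Tendsto (fun n => (t, x n t, x n (t - r))) atTop (nhds (t, p₀, p₀)) := by
        rw [nhds_prod_eq, nhds_prod_eq]
        exact tendsto_const_nhds.prodMk ((hconv.tendsto_at t).prodMk (hconv.tendsto_at (t - r)))
      exact ((hf.tendsto (t, p₀, p₀)).comp htend)
  simp only [hint] at hlim
  exact tendsto_nhds_unique hlim tendsto_const_nhds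
end
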